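/- With the setting of the previous statement, let $u_N \in \mathcal{M}_N$ satisfy $\mathcal{E}(u_N) = \min_{\mathcal{M}_N}\mathcal{E}$ for each $N$. Then $(u_N)$ has a subsequence converging pointwise to some $u \in \mathcal{M}$ with $\mathcal{E}(u) = \min_{\mathcal{M}}\mathcal{E}$. -/

import Mathlib

open Filter
open scoped ENNReal

/-- the set `𝓜` of odd, nondecreasing profiles with values in `[-1,1]`. -/
def IsM (u : ℤ → ℝ) : Prop :=
  (∀ j, u (-j) = - u j) ∧ Monotone u ∧ ∀ j, u j ∈ Set.Icc (-1 : ℝ) 1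

/-- the energy functional `𝓔(u) = ∑ F(u_j) + β ∑ (u_{j+1}-u_j)²` with values in `[0,∞]`. -/
noncomputable def energy (F : ℝ → ℝ) (β : ℝ) (u : ℤ → ℝ) : ℝ≥0∞ :=
  (∑' j : ℤ, ENNReal.ofReal (F (u j))) +
    ENNReal.ofReal β * ∑' j : ℤ, ENNReal.ofReal ((u (j + 1) - u j) ^ 2)

/-- sign of an integer index: `1` for `j ≥ 0`, `-1` for `j < 0`. -/
noncomputable def sgnZ (j : ℤ) : ℝ := if 0 ≤ j then 1 else -1

/-- the Ritz set `𝓜_N` of profiles agreeing with the shock profile for `|j| > N`. -/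
noncomputable def IsMN (N : ℕ) (u : ℤ → ℝ) : Prop :=
  IsM u ∧ ∀ j : ℤ, (N : ℤ) < |j| → u j = sgnZ j

open Topology

/-!
The set `𝓜` is compact for pointwise convergence (a closed subset of `[-1,1]^ℤ`), and `𝓔` is
pointwise lower semicontinuous (Fatou for series of continuous terms). The Ritz minima decrease
to `min_𝓜 𝓔`: cutting a finite-energy `v ∈ 𝓜` off to `±1` outside `[-N, N]` does not increase the
potential part and adds only the two boundary jumps `(1 - v_N)²` and `(v_{-N} + 1)²`, which vanish
as `N → ∞` because a finite potential energy and `F > 0` on `(-1, 1)` force `v_N → 1`.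
So a pointwise limit `u` of Ritz minimizers has `𝓔(u) ≤ liminf 𝓔(u_N) = min_𝓜 𝓔`.
-/

lemma ENNReal.tsum_le_liminf_tsum {ι α : Type*} {l : Filter ι} [l.NeBot]
    {g : ι → α → ℝ≥0∞} {f : α → ℝ≥0∞} (h : ∀ a, Tendsto (fun i => g i a) l (𝓝 (f a))) :
    ∑' a, f a ≤ liminf (fun i => ∑' a, g i a) l := by
  rw [ENNReal.tsum_eq_iSup_sum]
  refine iSup_le fun s => ?_
  calc ∑ a ∈ s, f a = liminf (fun i => ∑ a ∈ s, g i a) l :=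
        (tendsto_finsetSum _ fun a _ => h a).liminf_eq.symm
    _ ≤ liminf (fun i => ∑' a, g i a) l :=
        liminf_le_liminf (Eventually.of_forall fun i => ENNReal.sum_le_tsum s)

lemma isClosed_setOf_isM : IsClosed {u : ℤ → ℝ | IsM u} := by
  simp only [IsM, Set.ofPred_and, Set.ofPred_forall]
  exact (isClosed_iInter fun j =>
    isClosed_eq (continuous_apply (-j)) (continuous_apply j).neg).inter
    (isClosed_monotone.inter (isClosed_iInter fun j => isClosed_Icc.preimage (continuous_apply j)))

lemma isCompact_setOf_isM : IsCompact {u : ℤ → ℝ | IsM u} :=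
  (isCompact_univ_pi fun _ => isCompact_Icc).of_isClosed_subset isClosed_setOf_isM
    fun _ hu j _ => hu.2.2 j

lemma energy_eq_tsum (F : ℝ → ℝ) (β : ℝ) (u : ℤ → ℝ) :
    energy F β u = ∑' j, (ENNReal.ofReal (F (u j)) +
      ENNReal.ofReal β * ENNReal.ofReal ((u (j + 1) - u j) ^ 2)) := by
  rw [energy, ← ENNReal.tsum_mul_left, ← ENNReal.tsum_add]

lemma energy_le_liminf {ι : Type*} {l : Filter ι} [l.NeBot] {F : ℝ → ℝ} (β : ℝ)
    (hFcont : ContinuousOn F (Set.Icc (-1 : ℝ) 1)) {U : ι → ℤ → ℝ} {u : ℤ → ℝ}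
    (hU : ∀ i j, U i j ∈ Set.Icc (-1 : ℝ) 1) (h : ∀ j, Tendsto (fun i => U i j) l (𝓝 (u j))) :
    energy F β u ≤ liminf (fun i => energy F β (U i)) l := by
  simp only [energy_eq_tsum]
  refine ENNReal.tsum_le_liminf_tsum fun j => ?_
  have hu : u j ∈ Set.Icc (-1 : ℝ) 1 :=
    isClosed_Icc.mem_of_tendsto (h j) (Eventually.of_forall fun i => hU i j)
  have hF : Tendsto (fun i => F (U i j)) l (𝓝 (F (u j))) :=
    (hFcont (u j) hu).tendsto.comp
      (tendsto_nhdsWithin_of_tendsto_nhds_of_eventually_within _ (h j)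
        (Eventually.of_forall fun i => hU i j))
  have hjump : Tendsto (fun i => (U i (j + 1) - U i j) ^ 2) l (𝓝 ((u (j + 1) - u j) ^ 2)) :=
    ((h (j + 1)).sub (h j)).pow 2
  exact (ENNReal.tendsto_ofReal hF).add
    (ENNReal.Tendsto.const_mul (ENNReal.tendsto_ofReal hjump) (Or.inr ENNReal.ofReal_ne_top))

noncomputable def trunc (N : ℕ) (v : ℤ → ℝ) (j : ℤ) : ℝ :=
  if j < -(N : ℤ) then -1 else if j ≤ N then v j else 1

lemma isMN_trunc (N : ℕ) {v : ℤ → ℝ} (hv : IsM v) : IsMN N (trunc N v) := by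
  obtain ⟨hodd, hmono, hmem⟩ := hv
  refine ⟨⟨fun j => ?_, fun j k hjk => ?_, fun j => ?_⟩, fun j hj => ?_⟩ <;>
    simp only [trunc, sgnZ, Set.mem_Icc]
  · split_ifs <;> first | omega | rw [hodd] | norm_num
  · have := hmono hjk
    split_ifs <;> linarith [(hmem j).1, (hmem k).2]
  · split_ifs <;> first | exact hmem j | norm_num
  · rw [lt_abs] at hj
    split_ifs <;> first | rfl | omega

lemma trunc_jump_sq_le (N : ℕ) (v : ℤ → ℝ) (j : ℤ) :
    (trunc N v (j + 1) - trunc N v j) ^ 2 ≤ (v (j + 1) - v j) ^ 2 +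
      ((if j = N then (1 - v N) ^ 2 else 0) +
        (if j = -(N : ℤ) - 1 then (v (-N) + 1) ^ 2 else 0)) := by
  simp only [trunc]
  split_ifs <;> subst_vars <;> first | omega | (norm_num <;> positivity)

lemma energy_trunc_le {F : ℝ → ℝ} (β : ℝ) (hF1 : F 1 = 0) (hFm1 : F (-1) = 0) (N : ℕ)
    (v : ℤ → ℝ) :
    energy F β (trunc N v) ≤ energy F β v + ENNReal.ofReal β *
      (ENNReal.ofReal ((1 - v N) ^ 2) + ENNReal.ofReal ((v (-N) + 1) ^ 2)) := by
  have hpot : ∀ j, ENNReal.ofReal (F (trunc N v j)) ≤ ENNReal.ofReal (F (v j)) := by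
    intro j
    simp only [trunc]
    split_ifs <;> simp [hF1, hFm1]
  have hjump : ∀ j, ENNReal.ofReal ((trunc N v (j + 1) - trunc N v j) ^ 2) ≤
      ENNReal.ofReal ((v (j + 1) - v j) ^ 2) +
        ((if j = N then ENNReal.ofReal ((1 - v N) ^ 2) else 0) +
          (if j = -(N : ℤ) - 1 then ENNReal.ofReal ((v (-N) + 1) ^ 2) else 0)) := by
    intro j
    refine (ENNReal.ofReal_le_ofReal (trunc_jump_sq_le N v j)).trans_eq ?_
    rw [ENNReal.ofReal_add (sq_nonneg _) (by positivity),
      ENNReal.ofReal_add (by positivity) (by positivity)]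
    simp only [apply_ite ENNReal.ofReal, ENNReal.ofReal_zero]
  calc energy F β (trunc N v)
      ≤ ∑' j, ENNReal.ofReal (F (v j)) + ENNReal.ofReal β * ∑' j : ℤ,
          (ENNReal.ofReal ((v (j + 1) - v j) ^ 2) +
            ((if j = N then ENNReal.ofReal ((1 - v N) ^ 2) else 0) +
              (if j = -(N : ℤ) - 1 then ENNReal.ofReal ((v (-N) + 1) ^ 2) else 0))) :=
        add_le_add (ENNReal.tsum_le_tsum hpot) (by gcongr with j; exact hjump j)
    _ = _ := by
        rw [ENNReal.tsum_add, ENNReal.tsum_add, tsum_ite_eq, tsum_ite_eq, mul_add, energy,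
          add_assoc]

lemma IsM.tendsto_atTop_one {F : ℝ → ℝ} (hFcont : ContinuousOn F (Set.Icc (-1 : ℝ) 1))
    (hFpos : ∀ η ∈ Set.Ioo (-1 : ℝ) 1, 0 < F η) {v : ℤ → ℝ} (hv : IsM v)
    (hfin : ∑' j, ENNReal.ofReal (F (v j)) ≠ ⊤) : Tendsto v atTop (𝓝 1) := by
  obtain ⟨hodd, hmono, hmem⟩ := hv
  have hbdd : BddAbove (Set.range v) := ⟨1, Set.forall_mem_range.2 fun j => (hmem j).2⟩
  have hlim : Tendsto v atTop (𝓝 (⨆ j, v j)) := tendsto_atTop_ciSup hmono hbdd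
  set L := ⨆ j, v j
  have hL : L ∈ Set.Icc (-1 : ℝ) 1 :=
    isClosed_Icc.mem_of_tendsto hlim (Eventually.of_forall hmem)
  have hL0 : 0 ≤ L := by
    have hv0 : v 0 = 0 := by linarith [show v 0 = -v 0 by simpa using hodd 0]
    exact hv0 ▸ le_ciSup hbdd 0
  have hFL : F L ≤ 0 := by
    have hF : Tendsto (fun j => ENNReal.ofReal (F (v j))) atTop (𝓝 (ENNReal.ofReal (F L))) :=
      ENNReal.tendsto_ofReal ((hFcont L hL).tendsto.comp
        (tendsto_nhdsWithin_of_tendsto_nhds_of_eventually_within _ hlim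
          (Eventually.of_forall hmem)))
    have h0 : Tendsto (fun j => ENNReal.ofReal (F (v j))) atTop (𝓝 0) :=
      (ENNReal.tendsto_cofinite_zero_of_tsum_ne_top hfin).mono_left atTop_le_cofinite
    exact ENNReal.ofReal_eq_zero.1 (tendsto_nhds_unique hF h0)
  have hL1 : L = 1 := by
    by_contra hne
    exact (hFpos L ⟨by linarith, lt_of_le_of_ne hL.2 hne⟩).not_ge hFL
  rwa [hL1] at hlim

lemma liminf_energy_trunc_le {F : ℝ → ℝ} (β : ℝ) (hFcont : ContinuousOn F (Set.Icc (-1 : ℝ) 1))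
    (hFpos : ∀ η ∈ Set.Ioo (-1 : ℝ) 1, 0 < F η) (hF1 : F 1 = 0) (hFm1 : F (-1) = 0)
    {v : ℤ → ℝ} (hv : IsM v) :
    liminf (fun N : ℕ => energy F β (trunc N v)) atTop ≤ energy F β v := by
  by_cases htop : energy F β v = ⊤
  · exact htop ▸ le_top
  have hright : Tendsto (fun N : ℕ => v N) atTop (𝓝 1) :=
    (hv.tendsto_atTop_one hFcont hFpos (ne_top_of_le_ne_top htop le_self_add)).comp
      tendsto_natCast_atTop_atTop
  have hleft : Tendsto (fun N : ℕ => v (-N)) atTop (𝓝 (-1)) := by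
    simpa only [hv.1] using hright.neg
  have hdefect : Tendsto (fun N : ℕ => ENNReal.ofReal β *
      (ENNReal.ofReal ((1 - v N) ^ 2) + ENNReal.ofReal ((v (-N) + 1) ^ 2))) atTop (𝓝 0) := by
    have h1 := ENNReal.tendsto_ofReal (((tendsto_const_nhds (x := (1 : ℝ))).sub hright).pow 2)
    have h2 := ENNReal.tendsto_ofReal ((hleft.add (tendsto_const_nhds (x := (1 : ℝ)))).pow 2)
    simpa using ENNReal.Tendsto.const_mul (h1.add h2) (Or.inr ENNReal.ofReal_ne_top)
  calc liminf (fun N : ℕ => energy F β (trunc N v)) atTop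
      ≤ liminf (fun N : ℕ => energy F β v + ENNReal.ofReal β *
          (ENNReal.ofReal ((1 - v N) ^ 2) + ENNReal.ofReal ((v (-N) + 1) ^ 2))) atTop :=
        liminf_le_liminf (Eventually.of_forall fun N => energy_trunc_le β hF1 hFm1 N v)
    _ = energy F β v := by simpa using (tendsto_const_nhds.add hdefect).liminf_eq

lemma IsMN.mono {N M : ℕ} (hNM : N ≤ M) {u : ℤ → ℝ} (hu : IsMN N u) : IsMN M u :=
  ⟨hu.1, fun j hj => hu.2 j (lt_of_le_of_lt (by exact_mod_cast hNM) hj)⟩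

lemma tendsto_iInf_energy_isMN {F : ℝ → ℝ} (β : ℝ)
    (hFcont : ContinuousOn F (Set.Icc (-1 : ℝ) 1)) (hFpos : ∀ η ∈ Set.Ioo (-1 : ℝ) 1, 0 < F η)
    (hF1 : F 1 = 0) (hFm1 : F (-1) = 0) :
    Tendsto (fun N => ⨅ (u : ℤ → ℝ) (_ : IsMN N u), energy F β u) atTop
      (𝓝 (⨅ (u : ℤ → ℝ) (_ : IsM u), energy F β u)) := by
  have hanti : Antitone fun N => ⨅ (u : ℤ → ℝ) (_ : IsMN N u), energy F β u :=
    fun N M hNM => biInf_mono fun u hu => hu.mono hNM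
  convert tendsto_atTop_iInf hanti using 2
  refine le_antisymm (le_iInf fun N => biInf_mono fun u hu => hu.1) (le_iInf₂ fun v hv => ?_)
  calc ⨅ N, ⨅ (u : ℤ → ℝ) (_ : IsMN N u), energy F β u
      ≤ liminf (fun N : ℕ => energy F β (trunc N v)) atTop :=
        le_liminf_of_le (h := Eventually.of_forall fun N =>
          (iInf_le _ N).trans (biInf_le (fun u => energy F β u) (isMN_trunc N hv)))
    _ ≤ energy F β v := liminf_energy_trunc_le β hFcont hFpos hF1 hFm1 hv

theorem stmt11_general (F : ℝ → ℝ) (β : ℝ)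
    (hFcont : ContinuousOn F (Set.Icc (-1 : ℝ) 1))
    (hFpos : ∀ η ∈ Set.Ioo (-1 : ℝ) 1, 0 < F η)
    (hF1 : F 1 = 0) (hFm1 : F (-1) = 0)
    (U : ℕ → ℤ → ℝ)
    (hU : ∀ N, IsMN N (U N))
    (hUmin : ∀ N, energy F β (U N) = ⨅ (u : ℤ → ℝ) (_ : IsMN N u), energy F β u) :
    ∃ φ : ℕ → ℕ, StrictMono φ ∧ ∃ u : ℤ → ℝ, IsM u ∧
      (∀ j : ℤ, Tendsto (fun n => U (φ n) j) atTop (nhds (u j))) ∧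
      energy F β u = ⨅ (u' : ℤ → ℝ) (_ : IsM u'), energy F β u' := by
  obtain ⟨u, hu, φ, hφ, hlim⟩ := isCompact_setOf_isM.tendsto_subseq fun N => (hU N).1
  have hpt : ∀ j, Tendsto (fun n => U (φ n) j) atTop (𝓝 (u j)) := tendsto_pi_nhds.1 hlim
  refine ⟨φ, hφ, u, hu, hpt, le_antisymm ?_ (biInf_le _ hu)⟩
  calc energy F β u ≤ liminf (fun n => energy F β (U (φ n))) atTop :=
        energy_le_liminf β hFcont (fun n => (hU (φ n)).1.2.2) hpt
    _ = ⨅ (u' : ℤ → ℝ) (_ : IsM u'), energy F β u' := by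
        simp only [hUmin]
        exact ((tendsto_iInf_energy_isMN β hFcont hFpos hF1 hFm1).comp
          hφ.tendsto_atTop).liminf_eq

/-- a sequence of Ritz minimizers has a subsequence converging
pointwise to a global minimizer of the energy on `𝓜`. -/
theorem stmt11 (F : ℝ → ℝ) (β : ℝ) (hβ : 0 < β)
    (hFcont : ContinuousOn F (Set.Icc (-1 : ℝ) 1))
    (hFnonneg : ∀ η ∈ Set.Icc (-1 : ℝ) 1, 0 ≤ F η)
    (hFpos : ∀ η ∈ Set.Ioo (-1 : ℝ) 1, 0 < F η)
    (hF1 : F 1 = 0) (hFm1 : F (-1) = 0)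
    (U : ℕ → ℤ → ℝ)
    (hU : ∀ N, IsMN N (U N))
    (hUmin : ∀ N, energy F β (U N) = ⨅ (u : ℤ → ℝ) (_ : IsMN N u), energy F β u) :
    ∃ φ : ℕ → ℕ, StrictMono φ ∧ ∃ u : ℤ → ℝ, IsM u ∧
      (∀ j : ℤ, Tendsto (fun n => U (φ n) j) atTop (nhds (u j))) ∧
      energy F β u = ⨅ (u' : ℤ → ℝ) (_ : IsM u'), energy F β u' :=
  stmt11_general F β hFcont hFpos hF1 hFm1 U hU hUmin
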